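/- Let I=(A,A',R,G,ω,c) be an instance of MCRA with d dimensions, let 𝓕 ⊆ 𝓔 be a finite nonempty set, let x̃ : 𝓕 → (0,1), let u_a : 𝒯_a → ℝ≥0 be utility functions (write u(e) = u_a(q) for e = (a,q)), let Ã ⊆ A, G̃_ℓ ⊆ [k_ℓ] for each ℓ ∈ [d], R̃ ⊆ R, and χ ∈ {0,1}, and let ψ ∈ {0,1} be such that ψ = 1 or d ≥ 2. Suppose that: (i) if ψ = 1 then Ã = A(𝓕) and ∑_{e∈𝓕(a)} x̃(e) = 1 for every a ∈ Ã; (ii) for every ℓ ∈ [d], G̃_ℓ = G_ℓ(𝓕) and every a ∈ A(𝓕) belongs to G_{ℓ,i} for some i ∈ G_ℓ(𝓕); and (iii) R̃ = R(𝓕) and ∑_{r∈R(𝓕)} q(r) = ω* for every (a,q) ∈ 𝓕. Then the family of affine functionals on ℝ^𝓕 consisting of y ↦ ∑_{e∈𝓕(a)} y(e) − 1 for a ∈ Ã, y ↦ ∑_{e∈𝓕(ℓ,i)} u(e)·(y(e) − x̃(e)) for ℓ ∈ [d] and i ∈ G̃_ℓ, y ↦ ∑_{(a,q)∈𝓕(r)}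 q(r)·(y(a,q) − x̃(a,q)) for r ∈ R̃, and (if χ = 1) y ↦ ∑_{(a,q)∈𝓕} ω_a·(y(a,q) − x̃(a,q)), is not linearly independent. -/

import Mathlib

open scoped Classical BigOperators

noncomputable section

/-- An instance of the multidimensional capacitated resource allocation problem (MCRA)
with `d` dimensions. -/
structure MCRA (d : ℕ) where
  A : Type
  R : Type
  [fintypeA : Fintype A]
  [fintypeR : Fintype R]
  [decEqA : DecidableEq A]
  [decEqR : DecidableEq R]
  /-- The binding agents `A' ⊆ A`. -/
  bind : Finset A
  /-- Number of groups in each dimension. -/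
  k : Fin d → ℕ
  /-- The groups in each dimension. -/
  G : (ℓ : Fin d) → Fin (k ℓ) → Finset A
  G_disjoint : ∀ ℓ i j, i ≠ j → Disjoint (G ℓ i) (G ℓ j)
  /-- The demand of each agent. -/
  dem : A → ℕ
  dem_pos : ∀ a, 0 < dem a
  /-- The capacity of each resource. -/
  cap : R → ℕ
  cap_pos : ∀ r, 0 < cap r

attribute [instance] MCRA.fintypeA MCRA.fintypeR MCRA.decEqA MCRA.decEqR

namespace MCRA

variable {d : ℕ} (I : MCRA d)

/-- The set `𝒯_a` of `ω_a`-bundles of agent `a`. -/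
def bundles (a : I.A) : Finset (I.R → ℕ) :=
  (Fintype.piFinset fun _ : I.R => Finset.range (I.dem a + 1)).filter
    fun q => ∑ r, q r = I.dem a

/-- `ω* = max_{a ∈ A} ω_a`. -/
def demMax : ℕ := Finset.univ.sup I.dem

/-- `𝓕(a)`: the hyperedges of `𝓕` incident to agent `a`. -/
def Fagent (F : Finset (I.A × (I.R → ℕ))) (a : I.A) : Finset (I.A × (I.R → ℕ)) :=
  F.filter fun e => e.1 = a

/-- `𝓕(ℓ,i)`: the hyperedges of `𝓕` incident to group `G_{ℓ,i}`. -/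
def Fgroup (F : Finset (I.A × (I.R → ℕ))) (ℓ : Fin d) (i : Fin (I.k ℓ)) :
    Finset (I.A × (I.R → ℕ)) :=
  F.filter fun e => e.1 ∈ I.G ℓ i

/-- `𝓕(r)`: the hyperedges of `𝓕` incident to resource `r`. -/
def Fres (F : Finset (I.A × (I.R → ℕ))) (r : I.R) : Finset (I.A × (I.R → ℕ)) :=
  F.filter fun e => 1 ≤ e.2 r

/-- `A(𝓕)`: the agents with at least one incident hyperedge. -/
def Aof (F : Finset (I.A × (I.R → ℕ))) : Finset I.A := F.image Prod.fst

/-- `G_ℓ(𝓕)`: the groups of dimension `ℓ` with at least one incident hyperedge. -/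
def Gof (F : Finset (I.A × (I.R → ℕ))) (ℓ : Fin d) : Finset (Fin (I.k ℓ)) :=
  Finset.univ.filter fun i => (I.Fgroup F ℓ i).Nonempty

/-- `R(𝓕)`: the resources with at least one incident hyperedge. -/
def Rof (F : Finset (I.A × (I.R → ℕ))) : Finset I.R :=
  Finset.univ.filter fun r => (I.Fres F r).Nonempty

/-- The family of affine functionals on `ℝ^𝓕` from the linear program of the rounding
algorithm, each represented by the pair `(w, β)` of its linear part and constant term:
`y ↦ ∑_{e ∈ 𝓕(a)} y e − 1` for `a ∈ Ã`;
`y ↦ ∑_{e ∈ 𝓕(ℓ,i)} u e * (y e − x̃ e)` for `ℓ ∈ [d]` and `i ∈ G̃_ℓ`;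
`y ↦ ∑_{(a,q) ∈ 𝓕(r)} q r * (y (a,q) − x̃ (a,q))` for `r ∈ R̃`; and (if `χ = 1`)
`y ↦ ∑_{(a,q) ∈ 𝓕} ω_a * (y (a,q) − x̃ (a,q))`. -/
def affineFamily (F : Finset (I.A × (I.R → ℕ)))
    (xt : I.A × (I.R → ℕ) → ℝ) (u : I.A → (I.R → ℕ) → ℝ)
    (Atil : Finset I.A) (Gtil : (ℓ : Fin d) → Finset (Fin (I.k ℓ)))
    (Rtil : Finset I.R) (χ : ℕ) :
    (↥Atil ⊕ ((Σ ℓ : Fin d, ↥(Gtil ℓ)) ⊕ (↥Rtil ⊕ Fin χ))) → ((↥F → ℝ) × ℝ)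
  | Sum.inl a =>
      (fun e => if (e : I.A × (I.R → ℕ)).1 = (a : I.A) then (1 : ℝ) else 0, -1)
  | Sum.inr (Sum.inl p) =>
      (fun e => if (e : I.A × (I.R → ℕ)).1 ∈ I.G p.1 (p.2 : Fin (I.k p.1))
          then u (e : I.A × (I.R → ℕ)).1 (e : I.A × (I.R → ℕ)).2 else 0,
        -∑ e ∈ I.Fgroup F p.1 (p.2 : Fin (I.k p.1)), u e.1 e.2 * xt e)
  | Sum.inr (Sum.inr (Sum.inl r)) =>
      (fun e => ((e : I.A × (I.R → ℕ)).2 (r : I.R) : ℝ),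
        -∑ e ∈ I.Fres F (r : I.R), (e.2 (r : I.R) : ℝ) * xt e)
  | Sum.inr (Sum.inr (Sum.inr _)) =>
      (fun e => (I.dem (e : I.A × (I.R → ℕ)).1 : ℝ),
        -∑ e ∈ F, (I.dem e.1 : ℝ) * xt e)

end MCRA

/-!
If `d ≥ 2`: every hyperedge lies in exactly one group of each dimension, so for every `ℓ` the
group rows of dimension `ℓ` sum to the same functional `y ↦ ∑_{e ∈ 𝓕} u(e) (y(e) − x̃(e))`, and
the rows of two different dimensions give a dependency.

If `ψ = 1`: since `∑_{e ∈ 𝓕(a)} x̃(e) = 1` for every `a ∈ A(𝓕)`, the agent rows sum to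
`y ↦ ∑_{e ∈ 𝓕} (y(e) − x̃(e))`; since every bundle in `𝓕` puts exactly `ω*` units on `R(𝓕)`,
the resource rows sum to `ω*` times that functional.
-/

open Finset

theorem not_linearIndependent_of_smul_sum_eq_sum {ι κ μ R M : Type*} [Fintype κ] [Nonempty κ]
    [Fintype μ] [Semiring R] [AddCommMonoid M] [Module R M] {v : ι → M} {f : κ → ι} {g : μ → ι}
    (hf : f.Injective) (hg : g.Injective) (hfg : ∀ k l, f k ≠ g l) {c : R} (hc : c ≠ 0)
    (h : c • ∑ k, v (f k) = ∑ l, v (g l)) : ¬LinearIndependent R v := by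
  intro hv
  have hw := hv.comp _ (hf.sumElim hg hfg)
  rw [Fintype.linearIndependent_iffₛ] at hw
  obtain ⟨k⟩ := ‹Nonempty κ›
  refine hc (hw (Sum.elim (fun _ => c) 0) (Sum.elim 0 1) ?_ (Sum.inl k))
  simpa [Fintype.sum_sum_type, smul_sum] using h

theorem sum_ite_mem_eq_of_pairwise_disjoint {ι α β : Type*} [DecidableEq α] [AddCommMonoid β]
    {G : ι → Finset α} (hG : Pairwise fun i j => Disjoint (G i) (G j)) {s : Finset ι} {a : α}
    {i₀ : ι} (hi₀ : i₀ ∈ s) (ha : a ∈ G i₀) (b : β) :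
    ∑ i ∈ s, (if a ∈ G i then b else 0) = b := by
  rw [sum_eq_single_of_mem i₀ hi₀ fun i _ hi => if_neg fun hai =>
    disjoint_left.mp (hG hi) hai ha, if_pos ha]

/-- `y ↦ ∑_{e ∈ F} w e * (y e − x e)`, as a pair (linear part, constant term) like the rows of
`MCRA.affineFamily`. -/
def weightedDeviation {α : Type*} (F : Finset α) (x w : α → ℝ) : (F → ℝ) × ℝ :=
  (fun e => w e, -∑ e ∈ F, w e * x e)

namespace MCRA

variable {d : ℕ} (I : MCRA d) (F : Finset (I.A × (I.R → ℕ))) (xt : I.A × (I.R → ℕ) → ℝ)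
  (u : I.A → (I.R → ℕ) → ℝ) (Atil : Finset I.A) (Gtil : (ℓ : Fin d) → Finset (Fin (I.k ℓ)))
  (Rtil : Finset I.R) (χ : ℕ)

theorem demMax_pos [Nonempty I.A] : 0 < I.demMax :=
  (I.dem_pos (Classical.arbitrary _)).trans_le (le_sup (mem_univ _))

theorem fst_mem_Aof {e : I.A × (I.R → ℕ)} (he : e ∈ F) : e.1 ∈ I.Aof F :=
  mem_image_of_mem _ he

theorem sum_Fagent_Aof {β : Type*} [AddCommMonoid β] (f : I.A × (I.R → ℕ) → β) :
    ∑ a ∈ I.Aof F, ∑ e ∈ I.Fagent F a, f e = ∑ e ∈ F, f e :=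
  sum_fiberwise_of_maps_to (fun _ => I.fst_mem_Aof F) f

theorem sum_Fgroup_Gof {β : Type*} [AddCommMonoid β] (ℓ : Fin d) (f : I.A × (I.R → ℕ) → β)
    (hcov : ∀ a ∈ I.Aof F, ∃ i ∈ I.Gof F ℓ, a ∈ I.G ℓ i) :
    ∑ i ∈ I.Gof F ℓ, ∑ e ∈ I.Fgroup F ℓ i, f e = ∑ e ∈ F, f e := by
  simp only [Fgroup, sum_filter]
  rw [sum_comm]
  refine sum_congr rfl fun e he => ?_
  obtain ⟨i, hi, hei⟩ := hcov e.1 (I.fst_mem_Aof F he)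
  exact sum_ite_mem_eq_of_pairwise_disjoint (fun i j => I.G_disjoint ℓ i j) hi hei (f e)

theorem sum_Fres {β : Type*} [NonAssocSemiring β] (f : I.A × (I.R → ℕ) → β) (r : I.R) :
    ∑ e ∈ I.Fres F r, (e.2 r : β) * f e = ∑ e ∈ F, (e.2 r : β) * f e :=
  sum_filter_of_ne fun _ _ h => Nat.one_le_iff_ne_zero.mpr fun h0 => h (by simp [h0])

theorem sum_affineFamily_agent (hx : ∀ a ∈ I.Aof F, ∑ e ∈ I.Fagent F a, xt e = 1) :
    ∑ a : I.Aof F, I.affineFamily F xt u (I.Aof F) Gtil Rtil χ (Sum.inl a) =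
      weightedDeviation F xt 1 := by
  refine Prod.ext (funext fun e => ?_) ?_
  · simp only [Prod.fst_sum, Finset.sum_apply, affineFamily, weightedDeviation]
    rw [sum_coe_sort (I.Aof F) fun a => if _ = a then _ else _, sum_ite_eq,
      if_pos (I.fst_mem_Aof F e.2), Pi.one_apply]
  · simp only [Prod.snd_sum, affineFamily, weightedDeviation, Pi.one_apply, one_mul]
    rw [sum_coe_sort (I.Aof F) fun _ => -1, ← sum_Fagent_Aof, ← sum_neg_distrib]
    exact sum_congr rfl fun a ha => by rw [hx a ha]

theorem sum_affineFamily_resource (hω : ∀ e ∈ F, ∑ r ∈ I.Rof F, e.2 r = I.demMax) :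
    ∑ r : I.Rof F, I.affineFamily F xt u Atil Gtil (I.Rof F) χ (Sum.inr (Sum.inr (Sum.inl r))) =
      (I.demMax : ℝ) • weightedDeviation F xt 1 := by
  refine Prod.ext (funext fun e => ?_) ?_
  · simp only [Prod.fst_sum, Finset.sum_apply, affineFamily, weightedDeviation, Prod.smul_fst,
      Pi.smul_apply, Pi.one_apply, smul_eq_mul, mul_one]
    rw [sum_coe_sort (I.Rof F) fun r => ((e : I.A × (I.R → ℕ)).2 r : ℝ), ← Nat.cast_sum,
      hω e e.2]
  · simp only [Prod.snd_sum, affineFamily, weightedDeviation, Prod.smul_snd, Pi.one_apply,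
      one_mul, smul_eq_mul, mul_neg, mul_sum]
    rw [sum_coe_sort (I.Rof F) fun r => -∑ e ∈ I.Fres F r, (e.2 r : ℝ) * xt e,
      sum_neg_distrib, sum_congr rfl fun r _ => I.sum_Fres F xt r, sum_comm]
    refine congrArg _ (sum_congr rfl fun e he => ?_)
    rw [← sum_mul, ← Nat.cast_sum, hω e he]

theorem sum_affineFamily_group (ℓ : Fin d)
    (hcov : ∀ a ∈ I.Aof F, ∃ i ∈ I.Gof F ℓ, a ∈ I.G ℓ i) :
    ∑ i : I.Gof F ℓ, I.affineFamily F xt u Atil (I.Gof F) Rtil χ (Sum.inr (Sum.inl ⟨ℓ, i⟩)) =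
      weightedDeviation F xt fun e => u e.1 e.2 := by
  refine Prod.ext (funext fun e => ?_) ?_
  · simp only [Prod.fst_sum, Finset.sum_apply, affineFamily, weightedDeviation]
    rw [sum_coe_sort (I.Gof F ℓ) fun i => if _ ∈ I.G ℓ i then _ else 0]
    obtain ⟨i, hi, hei⟩ := hcov _ (I.fst_mem_Aof F e.2)
    exact sum_ite_mem_eq_of_pairwise_disjoint (fun i j => I.G_disjoint ℓ i j) hi hei _
  · simp only [Prod.snd_sum, affineFamily, weightedDeviation]
    rw [sum_coe_sort (I.Gof F ℓ) fun i => -∑ e ∈ I.Fgroup F ℓ i, u e.1 e.2 * xt e,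
      sum_neg_distrib, I.sum_Fgroup_Gof F ℓ _ hcov]

end MCRA

theorem constraints_not_linearIndependent_general {d : ℕ} (I : MCRA d)
    (F : Finset (I.A × (I.R → ℕ)))
    (hFne : F.Nonempty)
    (xt : I.A × (I.R → ℕ) → ℝ)
    (u : I.A → (I.R → ℕ) → ℝ)
    (Atil : Finset I.A) (Gtil : (ℓ : Fin d) → Finset (Fin (I.k ℓ))) (Rtil : Finset I.R)
    (χ : ℕ)
    (ψ : ℕ) (hψd : ψ = 1 ∨ 2 ≤ d)
    (hi : ψ = 1 → Atil = I.Aof F ∧ ∀ a ∈ Atil, ∑ e ∈ I.Fagent F a, xt e = 1)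
    (hii : ∀ ℓ, Gtil ℓ = I.Gof F ℓ ∧ ∀ a ∈ I.Aof F, ∃ i ∈ I.Gof F ℓ, a ∈ I.G ℓ i)
    (hiii : Rtil = I.Rof F ∧ ∀ e ∈ F, ∑ r ∈ I.Rof F, e.2 r = I.demMax) :
    ¬ LinearIndependent ℝ (I.affineFamily F xt u Atil Gtil Rtil χ) := by
  obtain ⟨e₀, he₀⟩ := hFne
  have ha₀ := I.fst_mem_Aof F he₀
  obtain rfl : Gtil = I.Gof F := funext fun ℓ => (hii ℓ).1
  obtain ⟨rfl, hω⟩ := hiii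
  rcases hψd with hψ | hd
  · obtain ⟨rfl, hx⟩ := hi hψ
    have : Nonempty (I.Aof F) := ⟨⟨e₀.1, ha₀⟩⟩
    have : Nonempty I.A := ⟨e₀.1⟩
    refine not_linearIndependent_of_smul_sum_eq_sum (g := fun r => Sum.inr (Sum.inr (Sum.inl r)))
      Sum.inl_injective (Sum.inr_injective.comp (Sum.inr_injective.comp Sum.inl_injective))
      (fun _ _ => Sum.inl_ne_inr) (Nat.cast_ne_zero.mpr I.demMax_pos.ne') ?_
    rw [I.sum_affineFamily_agent F xt u _ _ χ hx, I.sum_affineFamily_resource F xt u _ _ χ hω]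
  · set ℓ₀ : Fin d := ⟨0, by omega⟩
    set ℓ₁ : Fin d := ⟨1, by omega⟩
    obtain ⟨i₀, hi₀, -⟩ := (hii ℓ₀).2 e₀.1 ha₀
    have : Nonempty (I.Gof F ℓ₀) := ⟨⟨i₀, hi₀⟩⟩
    refine not_linearIndependent_of_smul_sum_eq_sum (c := (1 : ℝ))
      (f := fun i => Sum.inr (Sum.inl ⟨ℓ₀, i⟩)) (g := fun i => Sum.inr (Sum.inl ⟨ℓ₁, i⟩))
      (Sum.inr_injective.comp (Sum.inl_injective.comp sigma_mk_injective))
      (Sum.inr_injective.comp (Sum.inl_injective.comp sigma_mk_injective))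
      (by simp [ℓ₀, ℓ₁]) one_ne_zero ?_
    rw [one_smul, I.sum_affineFamily_group F xt u _ _ χ ℓ₀ (hii ℓ₀).2,
      I.sum_affineFamily_group F xt u _ _ χ ℓ₁ (hii ℓ₁).2]

/-- **Claim (the equality constraints are not linearly independent).**
Under the structural properties (i)–(iii), the family of affine functionals of the
linear program is not linearly independent. -/
theorem constraints_not_linearIndependent {d : ℕ} (I : MCRA d)
    (F : Finset (I.A × (I.R → ℕ))) (hFE : ∀ e ∈ F, e.2 ∈ I.bundles e.1)
    (hFne : F.Nonempty)
    (xt : I.A × (I.R → ℕ) → ℝ) (hxt : ∀ e ∈ F, 0 < xt e ∧ xt e < 1)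
    (u : I.A → (I.R → ℕ) → ℝ) (hu : ∀ a, ∀ q ∈ I.bundles a, 0 ≤ u a q)
    (Atil : Finset I.A) (Gtil : (ℓ : Fin d) → Finset (Fin (I.k ℓ))) (Rtil : Finset I.R)
    (χ : ℕ) (hχ01 : χ = 0 ∨ χ = 1)
    (ψ : ℕ) (hψ01 : ψ = 0 ∨ ψ = 1) (hψd : ψ = 1 ∨ 2 ≤ d)
    (hi : ψ = 1 → Atil = I.Aof F ∧ ∀ a ∈ Atil, ∑ e ∈ I.Fagent F a, xt e = 1)
    (hii : ∀ ℓ, Gtil ℓ = I.Gof F ℓ ∧ ∀ a ∈ I.Aof F, ∃ i ∈ I.Gof F ℓ, a ∈ I.G ℓ i)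
    (hiii : Rtil = I.Rof F ∧ ∀ e ∈ F, ∑ r ∈ I.Rof F, e.2 r = I.demMax) :
    ¬ LinearIndependent ℝ (I.affineFamily F xt u Atil Gtil Rtil χ) :=
  constraints_not_linearIndependent_general I F hFne xt u Atil Gtil Rtil χ ψ hψd hi hii hiii
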